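/- If z₀ satisfies ψ(z₀) = q with ρ̂ < z₀ < ρ, then z₀ is a simple zero of the function q − ψ(z); equivalently, it is impossible that there exist an open ball B around z₀ and a holomorphic function f on B with f(z₀) ≠ 0 and q − ψ(z) = (z − z₀)²·f(z) on B (in particular ψ'(z₀) ≠ 0). -/

import Mathlib

/-!
On the real segment `(ρ̂, ρ)` the radicand `p` is positive, so `ψ` is real there, holomorphic
near it, and `ψ'(x) = μ + (θ + σ²x)/√p(x)`. If `ψ(x) = q` and `ψ'(x) = 0`, eliminating `μ`
between the two equations writes a quantity that is positive because `q > 0` as minus a square.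
Hence `ψ'(z₀) ≠ 0`, and a double zero of `q − ψ` at `z₀` would force `ψ'(z₀) = 0`.
-/

open Complex Filter Topology

theorem Complex.ofReal_cpow_half {x : ℝ} (hx : 0 ≤ x) : (x : ℂ) ^ (1 / 2 : ℂ) = (√x : ℝ) := by
  rw [Real.sqrt_eq_rpow, ofReal_cpow hx]
  norm_num

theorem HasDerivAt.cpow_half {f : ℂ → ℂ} {f' z : ℂ} (hf : HasDerivAt f f' z)
    (hz : f z ∈ slitPlane) :
    HasDerivAt (fun w => f w ^ (1 / 2 : ℂ)) (f' / (2 * f z ^ (1 / 2 : ℂ))) z := by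
  convert hf.cpow_const hz using 1
  rw [show (1 / 2 : ℂ) - 1 = -(1 / 2) by norm_num, cpow_neg]
  ring

theorem HasDerivAt.eq_zero_of_eventuallyEq_sq_mul {𝕜 : Type*} [NontriviallyNormedField 𝕜]
    {g f : 𝕜 → 𝕜} {D z₀ : 𝕜} (hg : HasDerivAt g D z₀) (hf : DifferentiableAt 𝕜 f z₀)
    (heq : g =ᶠ[𝓝 z₀] fun z => (z - z₀) ^ 2 * f z) : D = 0 := by
  have hsq : HasDerivAt (fun z => (z - z₀) ^ 2 * f z) 0 z₀ := by
    simpa using (((hasDerivAt_id' z₀).sub_const z₀).fun_pow 2).fun_mul hf.hasDerivAt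
  exact hg.unique (hsq.congr_of_eventuallyEq heq)

noncomputable def nigRadicand (κ θ σ : ℝ) (z : ℂ) : ℂ :=
  1 - 2 * (κ : ℂ) * (θ : ℂ) * z - (κ : ℂ) * (σ : ℂ) ^ 2 * z ^ 2

noncomputable def nigExponent (κ θ σ μ : ℝ) (z : ℂ) : ℂ :=
  1 / (κ : ℂ) - (1 / (κ : ℂ)) * nigRadicand κ θ σ z ^ (1 / 2 : ℂ) + (μ : ℂ) * z

theorem nigRadicand_ofReal (κ θ σ x : ℝ) :
    nigRadicand κ θ σ x = ((1 - 2 * κ * θ * x - κ * σ ^ 2 * x ^ 2 : ℝ) : ℂ) := by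
  simp only [nigRadicand]
  push_cast
  ring

theorem nigRadicand_pos {κ σ θ x : ℝ} (hκ : 0 < κ) (hσ : σ ≠ 0)
    (hlo : (-θ - √(θ ^ 2 + σ ^ 2 / κ)) / σ ^ 2 < x)
    (hhi : x < (-θ + √(θ ^ 2 + σ ^ 2 / κ)) / σ ^ 2) :
    0 < 1 - 2 * κ * θ * x - κ * σ ^ 2 * x ^ 2 := by
  have hσ2 : 0 < σ ^ 2 := by positivity
  have hlo' := (div_lt_iff₀ hσ2).1 hlo
  have hhi' := (lt_div_iff₀ hσ2).1 hhi
  have hsq : (θ + σ ^ 2 * x) ^ 2 < θ ^ 2 + σ ^ 2 / κ := by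
    have := sq_lt_sq' (a := θ + σ ^ 2 * x) (by linarith) (by linarith)
    rwa [Real.sq_sqrt (by positivity)] at this
  have hfactor : 1 - 2 * κ * θ * x - κ * σ ^ 2 * x ^ 2
      = κ / σ ^ 2 * (θ ^ 2 + σ ^ 2 / κ - (θ + σ ^ 2 * x) ^ 2) := by
    field_simp
    ring
  rw [hfactor]
  exact mul_pos (by positivity) (sub_pos.2 hsq)

theorem hasDerivAt_nigExponent {κ θ σ : ℝ} (μ : ℝ) {z : ℂ} (hκ : κ ≠ 0)
    (hz : nigRadicand κ θ σ z ∈ slitPlane) :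
    HasDerivAt (nigExponent κ θ σ μ)
      (μ + (θ + σ ^ 2 * z) / nigRadicand κ θ σ z ^ (1 / 2 : ℂ)) z := by
  have hp : HasDerivAt (nigRadicand κ θ σ) (-(2 * κ * θ) - κ * σ ^ 2 * (2 * z)) z :=
    ((((hasDerivAt_id' z).const_mul (2 * (κ : ℂ) * θ)).const_sub 1).fun_sub
      ((hasDerivAt_pow 2 z).const_mul ((κ : ℂ) * (σ : ℂ) ^ 2))).congr_deriv (by ring)
  have hκ' : (κ : ℂ) ≠ 0 := ofReal_ne_zero.2 hκ
  refine ((((hp.cpow_half hz).const_mul (1 / (κ : ℂ))).const_sub (1 / (κ : ℂ))).fun_add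
    ((hasDerivAt_id' z).const_mul (μ : ℂ))).congr_deriv ?_
  field_simp
  ring

-- Eliminating `μ`: the two equations give `κqs = s + κθx − 1`, and then
-- `κqs · (σ²κqs + 2σ² + 2κθ²) = −κ(θ(s − 1) − σ²x)² ≤ 0`.
theorem nig_deriv_ne_zero_of_eq {κ σ θ μ q x s : ℝ} (hκ : 0 < κ) (hσ : σ ≠ 0) (hq : 0 < q)
    (hs : 0 < s) (hs2 : s ^ 2 = 1 - 2 * κ * θ * x - κ * σ ^ 2 * x ^ 2)
    (hval : 1 / κ - s / κ + μ * x = q) :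
    μ + (θ + σ ^ 2 * x) / s ≠ 0 := by
  intro hderiv
  have hμs : μ * s = -(θ + σ ^ 2 * x) := by
    field_simp at hderiv
    linarith
  have hval' : 1 - s + μ * x * κ = q * κ := by
    field_simp at hval
    linarith
  have hqs : κ * q * s = s + κ * θ * x - 1 := by
    linear_combination (-s) * hval' + (κ * x) * hμs - hs2
  have hid : κ * q * s * (σ ^ 2 * (κ * q * s) + 2 * σ ^ 2 + 2 * κ * θ ^ 2)
      = -(κ * (θ * (s - 1) - σ ^ 2 * x) ^ 2) := by
    linear_combination (σ ^ 2 * (κ * q * s + s + κ * θ * x - 1) + 2 * σ ^ 2 + 2 * κ * θ ^ 2) * hqs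
      + (σ ^ 2 + κ * θ ^ 2) * hs2
  have hσ2 : 0 < σ ^ 2 := by positivity
  have hpos : 0 < κ * q * s * (σ ^ 2 * (κ * q * s) + 2 * σ ^ 2 + 2 * κ * θ ^ 2) := by positivity
  nlinarith [sq_nonneg (θ * (s - 1) - σ ^ 2 * x)]

/-- If z₀ satisfies ψ(z₀) = q with ρ̂ < z₀ < ρ, then z₀ is a simple zero of
q − ψ: there do not exist an open ball B around z₀ and a holomorphic function f on B with
f(z₀) ≠ 0 and q − ψ(z) = (z − z₀)²·f(z) on B; in particular ψ'(z₀) ≠ 0. -/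
theorem nig_solution_simple_zero
    (κ σ q θ μ ρ ρhat : ℝ)
    (hκ : 0 < κ) (hσ : 0 < σ) (hq : 0 < q)
    (hρ : ρ = (-θ + Real.sqrt (θ ^ 2 + σ ^ 2 / κ)) / σ ^ 2)
    (hρhat : ρhat = (-θ - Real.sqrt (θ ^ 2 + σ ^ 2 / κ)) / σ ^ 2)
    (ψ : ℂ → ℂ)
    (hψ : ∀ z : ℂ, ψ z =
      1 / (κ : ℂ) -
        (1 / (κ : ℂ)) *
          (1 - 2 * (κ : ℂ) * (θ : ℂ) * z - (κ : ℂ) * (σ : ℂ) ^ 2 * z ^ 2) ^ (1 / 2 : ℂ) +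
        (μ : ℂ) * z)
    (z₀ : ℂ) (hz₀re : z₀.im = 0) (hlo : ρhat < z₀.re) (hhi : z₀.re < ρ)
    (hsol : ψ z₀ = (q : ℂ)) :
    (¬ ∃ (r : ℝ) (f : ℂ → ℂ), 0 < r ∧
        DifferentiableOn ℂ f (Metric.ball z₀ r) ∧ f z₀ ≠ 0 ∧
        ∀ z ∈ Metric.ball z₀ r, (q : ℂ) - ψ z = (z - z₀) ^ 2 * f z) ∧
      deriv ψ z₀ ≠ 0 := by
  obtain ⟨x₀, rfl⟩ : ∃ x₀ : ℝ, z₀ = x₀ := ⟨z₀.re, Complex.ext rfl (by simp [hz₀re])⟩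
  obtain rfl : ψ = nigExponent κ θ σ μ := funext hψ
  rw [ofReal_re] at hlo hhi
  subst hρ hρhat
  set P := 1 - 2 * κ * θ * x₀ - κ * σ ^ 2 * x₀ ^ 2
  have hP : 0 < P := nigRadicand_pos hκ hσ.ne' hlo hhi
  have hroot : nigRadicand κ θ σ x₀ ^ (1 / 2 : ℂ) = (√P : ℝ) := by
    rw [nigRadicand_ofReal, ofReal_cpow_half hP.le]
  have hval : 1 / κ - √P / κ + μ * x₀ = q := by
    have : ((1 / κ - √P / κ + μ * x₀ : ℝ) : ℂ) = q := by
      rw [← hsol, nigExponent, hroot]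
      push_cast
      ring
    exact_mod_cast this
  have hderiv : HasDerivAt (nigExponent κ θ σ μ) ((μ + (θ + σ ^ 2 * x₀) / √P : ℝ) : ℂ) x₀ := by
    have := hasDerivAt_nigExponent (θ := θ) (σ := σ) μ hκ.ne'
      (z := x₀) (by rw [nigRadicand_ofReal]; exact ofReal_mem_slitPlane.2 hP)
    rw [hroot] at this
    exact_mod_cast this
  have hD : μ + (θ + σ ^ 2 * x₀) / √P ≠ 0 :=
    nig_deriv_ne_zero_of_eq hκ hσ.ne' hq (Real.sqrt_pos.2 hP) (Real.sq_sqrt hP.le) hval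
  refine ⟨fun ⟨r, f, hr, hf, _, heq⟩ => hD ?_, by rw [hderiv.deriv]; exact_mod_cast hD⟩
  have hball := Metric.ball_mem_nhds (x₀ : ℂ) hr
  have := (hderiv.const_sub (q : ℂ)).eq_zero_of_eventuallyEq_sq_mul
    (hf.differentiableAt hball) (eventually_of_mem hball heq)
  exact_mod_cast neg_eq_zero.1 this
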